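/- Let R be a commutative ring, σ: R → R a ring endomorphism, Φ a d×d matrix over R, and n ≥ 1. Let B be the (nd)×(nd) block matrix with d×d blocks given by: B_{i,i+1} = I_d (the d×d identity) for 1 ≤ i ≤ n−1, B_{n,1} = Φ, and all other blocks zero. Then the product B·σ(B)·σ²(B)⋯σ^{n−1}(B), where σ acts entrywise on matrices, is block diagonal, with i-th diagonal block equal to σ^{n−i}(Φ) for 1 ≤ i ≤ n. In particular, if Φ is invertible then this product is invertible. -/

import Mathlib

/-!
Over the ring `S = M_d(R)`, `B` is the `n × n` matrix `C` with `1` on the superdiagonal and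
`Φ` in the bottom-left corner, and `σ` acts on `S` entrywise as `τ`. Each factor `τ^m(C)`
moves row `i` one step around the cycle `0 → 1 → ⋯ → n-1 → 0`, multiplying by `1` except
when it passes the corner, which the row starting at `i` does at step `m = n-1-i`, picking up
`τ^{n-1-i}(Φ)`. After `n` steps every row is back where it started, so the product is
diagonal; a diagonal matrix with unit entries is a unit.
-/

namespace Matrix

theorem mul_apply_of_forall_ne_eq_zero {S ι κ μ : Type*} [NonUnitalNonAssocSemiring S] [Fintype κ]
    {P : Matrix ι κ S} {M : Matrix κ μ S} {i : ι} {l : κ} (h : ∀ l' ≠ l, P i l' = 0) (j : μ) :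
    (P * M) i j = P i l * M l j := by
  rw [mul_apply, Finset.sum_eq_single l (fun l' _ hl' => by rw [h l' hl', zero_mul]) (by simp)]

section CyclicShift

variable {S : Type*} [Ring S]

def cyclicShift (n : ℕ) (Φ : S) : Matrix (Fin n) (Fin n) S :=
  of fun i j => if (j : ℕ) = i + 1 then 1 else if (i : ℕ) = n - 1 ∧ (j : ℕ) = 0 then Φ else 0

theorem prod_map_cyclicShift (τ : S →+* S) (Φ : S) {n k : ℕ} (hk : k ≤ n) :
    ((List.range k).map fun m => (cyclicShift n Φ).map ⇑(τ ^ m)).prod =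
      -- The row starting at `i` has passed the corner iff `i + k ≥ n`.
      of fun i j : Fin n => if (j : ℕ) = i + k then 1
        else if (i : ℕ) + k = n + j then (τ ^ (n - 1 - (i : ℕ))) Φ else 0 := by
  induction k with
  | zero =>
    ext i j
    simp only [List.range_zero, List.map_nil, List.prod_nil, one_apply, of_apply, Fin.ext_iff]
    split_ifs <;> first | rfl | omega
  | succ k ih =>
    ext i j
    rw [List.range_succ, List.map_append, List.prod_append, List.map_singleton,
      List.prod_singleton, ih (by omega)]
    obtain ⟨l, hl⟩ : ∃ l : Fin n, (l : ℕ) = i + k ∨ (i : ℕ) + k = n + l :=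
      if hlt : (i : ℕ) + k < n then ⟨⟨_, hlt⟩, .inl rfl⟩
      else ⟨⟨i + k - n, by omega⟩, .inr (by simp only; omega)⟩
    rw [mul_apply_of_forall_ne_eq_zero (l := l) fun l' hl' => by
      rw [ne_eq, Fin.ext_iff] at hl'; rw [of_apply, if_neg (by omega), if_neg (by omega)]]
    simp only [cyclicShift, of_apply, map_apply]
    split_ifs <;> first | omega | (rw [one_mul]; congr 2; omega) | simp

theorem prod_map_cyclicShift_self (τ : S →+* S) (Φ : S) (n : ℕ) :
    ((List.range n).map fun m => (cyclicShift n Φ).map ⇑(τ ^ m)).prod =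
      diagonal fun i : Fin n => (τ ^ (n - 1 - (i : ℕ))) Φ := by
  rw [prod_map_cyclicShift τ Φ le_rfl]
  ext i j
  rw [of_apply, diagonal_apply, if_neg (by omega)]
  exact if_congr (by rw [Fin.ext_iff]; omega) rfl rfl

end CyclicShift

end Matrix

theorem RingHom.mapMatrix_pow_apply {R m : Type*} [Semiring R] [Fintype m] [DecidableEq m]
    (σ : R →+* R) (k : ℕ) (M : Matrix m m R) : (σ.mapMatrix ^ k) M = M.map ⇑(σ ^ k) := by
  induction k with
  | zero => simp
  | succ k ih =>
    rw [pow_succ', RingHom.mul_def, RingHom.comp_apply, ih, RingHom.mapMatrix_apply,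
      Matrix.map_map, pow_succ', RingHom.mul_def, RingHom.coe_comp]

theorem Matrix.compRingEquiv_map_mapMatrix_pow {R I J : Type*} [Semiring R] [Fintype I]
    [Fintype J] [DecidableEq J] (σ : R →+* R) (k : ℕ) (M : Matrix I I (Matrix J J R)) :
    compRingEquiv I J R (M.map ⇑(σ.mapMatrix ^ k)) = (compRingEquiv I J R M).map ⇑(σ ^ k) := by
  rw [funext (σ.mapMatrix_pow_apply k)]
  exact comp_map_map _ _ _

open Matrix in
theorem statement10_general {R : Type*} [CommRing R] (σ : R →+* R) (d n : ℕ)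
    (Φ : Matrix (Fin d) (Fin d) R)
    (B : Matrix (Fin n × Fin d) (Fin n × Fin d) R)
    (hB : B = Matrix.of fun x y =>
      if (y.1 : ℕ) = (x.1 : ℕ) + 1 then (1 : Matrix (Fin d) (Fin d) R) x.2 y.2
      else if (x.1 : ℕ) = n - 1 ∧ (y.1 : ℕ) = 0 then Φ x.2 y.2
      else 0) :
    (((List.range n).map fun i => B.map ⇑(σ ^ i)).prod =
      Matrix.of fun x y =>
        if x.1 = y.1 then (Φ.map ⇑(σ ^ (n - 1 - (x.1 : ℕ)))) x.2 y.2 else 0) ∧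
    (IsUnit Φ → IsUnit ((List.range n).map fun i => B.map ⇑(σ ^ i)).prod) := by
  obtain rfl : B = compRingEquiv (Fin n) (Fin d) R (cyclicShift n Φ) := by
    ext x y
    simp only [hB, compRingEquiv_apply, comp_apply, cyclicShift, of_apply]
    split_ifs <;> rfl
  have hprod : ((List.range n).map fun i => (compRingEquiv (Fin n) (Fin d) R
      (cyclicShift n Φ)).map ⇑(σ ^ i)).prod =
      compRingEquiv (Fin n) (Fin d) R
        (diagonal fun i : Fin n => (σ.mapMatrix ^ (n - 1 - (i : ℕ))) Φ) := by
    simp only [← compRingEquiv_map_mapMatrix_pow, ← prod_map_cyclicShift_self, map_list_prod,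
      List.map_map, Function.comp_def]
  refine ⟨?_, fun hΦ => ?_⟩
  · rw [hprod]
    ext x y
    simp only [compRingEquiv_apply, comp_apply, of_apply, diagonal_apply]
    split_ifs <;> simp [RingHom.mapMatrix_pow_apply]
  · rw [hprod]
    exact ((Pi.isUnit_iff.2 fun i => hΦ.map _).map (diagonalRingHom _ _)).map _

theorem statement10 {R : Type*} [CommRing R] (σ : R →+* R) (d n : ℕ) (hn : 0 < n)
    (Φ : Matrix (Fin d) (Fin d) R)
    (B : Matrix (Fin n × Fin d) (Fin n × Fin d) R)
    (hB : B = Matrix.of fun x y =>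
      if (y.1 : ℕ) = (x.1 : ℕ) + 1 then (1 : Matrix (Fin d) (Fin d) R) x.2 y.2
      else if (x.1 : ℕ) = n - 1 ∧ (y.1 : ℕ) = 0 then Φ x.2 y.2
      else 0) :
    (((List.range n).map fun i => B.map ⇑(σ ^ i)).prod =
      Matrix.of fun x y =>
        if x.1 = y.1 then (Φ.map ⇑(σ ^ (n - 1 - (x.1 : ℕ)))) x.2 y.2 else 0) ∧
    (IsUnit Φ → IsUnit ((List.range n).map fun i => B.map ⇑(σ ^ i)).prod) :=
  statement10_general σ d n Φ B hB
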